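/- arXiv:1511.03222 — 6 statements merged into one kernel-verified Lean document; each statement's English description precedes it below -/
import Mathlib

section
/- Consider the parameter-error dynamics φ̇(t) = −u(t)uᵀ(t)φ(t) where u is piecewise continuous, bounded by u_max, and persistently exciting with constants α, T. Then along solutions, the Lyapunov function V(t) = ½‖φ(t)‖² satisfies V(t+T) ≤ (1 − 2α²/(u_max²·T·(1+u_max²T)²))·V(t) for all t≥t₀. -/
/-!
Along a solution `d/dt ‖φ‖² = -2 ⟪u, φ⟫²`, so over a window `[t, t + T]` the squared norm drops
by `2 S` with `S = ∫ ⟪u, φ⟫²`. Inside the window `φ` drifts from `φ t` by at most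
`umax ∫ |⟪u, φ⟫| ≤ umax √(T S)` (Cauchy–Schwarz), hence
`|⟪u τ, φ t⟫| ≤ |⟪u τ, φ τ⟫| + umax² √(T S)` and, squaring and integrating,
`∫ ⟪u, φ t⟫² ≤ (1 + umax² T)² S`. Persistent excitation bounds the left side below by
`α ‖φ t‖²`, and together with `‖u‖ ≤ umax` it forces `α ≤ umax² T`; so
`α² ‖φ t‖² ≤ umax² T (1 + umax² T)² S`, which is the contraction.
-/

open RealInnerProductSpace MeasureTheory Set
open scoped Interval

namespace intervalIntegral

variable {a b : ℝ}

theorem integral_mono_on_of_nonneg {μ : Measure ℝ} {f g : ℝ → ℝ} (hab : a ≤ b)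
    (hf : ∀ x ∈ Icc a b, 0 ≤ f x) (hg : IntervalIntegrable g μ a b)
    (h : ∀ x ∈ Icc a b, f x ≤ g x) : ∫ x in a..b, f x ∂μ ≤ ∫ x in a..b, g x ∂μ := by
  rw [integral_of_le hab, integral_of_le hab]
  refine integral_mono_of_nonneg ?_ hg.1 ?_ <;>
    refine ae_restrict_of_forall_mem measurableSet_Ioc fun x hx => ?_
  exacts [hf x (Ioc_subset_Icc_self hx), h x (Ioc_subset_Icc_self hx)]

theorem integral_add_const_sq {f : ℝ → ℝ} (hf : IntervalIntegrable f volume a b)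
    (hf2 : IntervalIntegrable (fun x => f x ^ 2) volume a b) (c : ℝ) :
    ∫ x in a..b, (f x + c) ^ 2 =
      (∫ x in a..b, f x ^ 2) + 2 * c * (∫ x in a..b, f x) + c ^ 2 * (b - a) := by
  have hexp : (fun x => (f x + c) ^ 2) = fun x => f x ^ 2 + (2 * c * f x + c ^ 2) := by
    funext x; ring
  rw [hexp, integral_add hf2 ((hf.const_mul _).add intervalIntegrable_const),
    integral_add (hf.const_mul _) intervalIntegrable_const, integral_const_mul, integral_const,
    smul_eq_mul]
  ring

theorem sq_integral_le_mul_integral_sq {f : ℝ → ℝ} (hab : a ≤ b)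
    (hf : IntervalIntegrable f volume a b)
    (hf2 : IntervalIntegrable (fun x => f x ^ 2) volume a b) :
    (∫ x in a..b, f x) ^ 2 ≤ (b - a) * ∫ x in a..b, f x ^ 2 := by
  have hquad : ∀ c : ℝ, 0 ≤ (b - a) * (c * c) + 2 * (∫ x in a..b, f x) * c +
      ∫ x in a..b, f x ^ 2 := fun c => by
    have := integral_nonneg (μ := volume) hab fun x _ => sq_nonneg (f x + c)
    rw [integral_add_const_sq hf hf2] at this
    linarith
  have := discrim_le_zero hquad
  rw [discrim] at this
  linarith

end intervalIntegral

theorem IntervalIntegrable.abs_of_sq {a b : ℝ} {f : ℝ → ℝ}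
    (h : IntervalIntegrable (fun x => f x ^ 2) volume a b) :
    IntervalIntegrable (fun x => |f x|) volume a b := by
  have hmeas : AEStronglyMeasurable (fun x => |f x|) (volume.restrict (Ι a b)) := by
    simpa only [Real.sqrt_sq_eq_abs] using
      Real.continuous_sqrt.comp_aestronglyMeasurable h.def'.aestronglyMeasurable
  refine (h.add (intervalIntegrable_const (c := 1))).mono_fun' hmeas (ae_of_all _ fun x => ?_)
  simp only [Real.norm_eq_abs, abs_abs]
  nlinarith [sq_abs (f x), abs_nonneg (f x)]

theorem le_integral_inner_sq_of_norm_eq_one {E : Type*} [NormedAddCommGroup E]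
    [InnerProductSpace ℝ E] {u : ℝ → E} {α a b : ℝ}
    (h : ∀ w : E, ‖w‖ = 1 → α ≤ ∫ s in a..b, ⟪u s, w⟫ ^ 2) (v : E) :
    α * ‖v‖ ^ 2 ≤ ∫ s in a..b, ⟪u s, v⟫ ^ 2 := by
  rcases eq_or_ne v 0 with rfl | hv
  · simp
  have hw := h (‖v‖⁻¹ • v) (norm_smul_inv_norm hv)
  simp only [real_inner_smul_right, mul_pow, intervalIntegral.integral_const_mul] at hw
  calc α * ‖v‖ ^ 2 ≤ (‖v‖⁻¹ ^ 2 * ∫ s in a..b, ⟪u s, v⟫ ^ 2) * ‖v‖ ^ 2 := by gcongr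
    _ = ∫ s in a..b, ⟪u s, v⟫ ^ 2 := by field_simp

theorem integral_inner_sq_le_of_norm_le {E : Type*} [NormedAddCommGroup E]
    [InnerProductSpace ℝ E] {u : ℝ → E} {M a b : ℝ} (hab : a ≤ b)
    (hu : ∀ s ∈ Icc a b, ‖u s‖ ≤ M) (v : E) :
    ∫ s in a..b, ⟪u s, v⟫ ^ 2 ≤ M ^ 2 * ‖v‖ ^ 2 * (b - a) := by
  calc ∫ s in a..b, ⟪u s, v⟫ ^ 2 ≤ ∫ _ in a..b, M ^ 2 * ‖v‖ ^ 2 :=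
        intervalIntegral.integral_mono_on_of_nonneg hab (fun s _ => sq_nonneg _)
          intervalIntegrable_const fun s hs =>
          calc ⟪u s, v⟫ ^ 2 ≤ (‖u s‖ * ‖v‖) ^ 2 := by
                rw [← sq_abs]; gcongr; exact abs_real_inner_le_norm _ _
            _ ≤ M ^ 2 * ‖v‖ ^ 2 := by rw [mul_pow]; gcongr; exact hu s hs
    _ = M ^ 2 * ‖v‖ ^ 2 * (b - a) := by
      rw [intervalIntegral.integral_const, smul_eq_mul]; ring

section ErrorDynamics

variable {E : Type*} [NormedAddCommGroup E] [InnerProductSpace ℝ E]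

def SolvesErrorDynamics (u φ : ℝ → E) (t₀ : ℝ) : Prop :=
  ∀ t, t₀ ≤ t → HasDerivAt φ (-(⟪u t, φ t⟫ • u t)) t

namespace SolvesErrorDynamics

variable {u φ : ℝ → E} {t₀ a b M : ℝ}

theorem hasDerivAt_norm_sq (hφ : SolvesErrorDynamics u φ t₀) {s : ℝ} (hs : t₀ ≤ s) :
    HasDerivAt (‖φ ·‖ ^ 2) (-(2 * ⟪u s, φ s⟫ ^ 2)) s := by
  convert (hφ s hs).norm_sq using 1
  rw [inner_neg_right, real_inner_smul_right, real_inner_comm]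
  ring

theorem intervalIntegrable_inner_sq (hφ : SolvesErrorDynamics u φ t₀) (ha : t₀ ≤ a)
    (hab : a ≤ b) : IntervalIntegrable (fun s => ⟪u s, φ s⟫ ^ 2) volume a b := by
  -- `u` need not be measurable: `⟪u, φ⟫²` is integrable as the derivative of a monotone function.
  have hderiv : ∀ s, t₀ ≤ s →
      HasDerivAt (fun r => -(‖φ r‖ ^ 2 / 2)) (⟪u s, φ s⟫ ^ 2) s := fun s hs =>
    ((hφ.hasDerivAt_norm_sq hs).div_const 2).neg.congr_deriv (by ring)
  refine (intervalIntegrable_iff_integrableOn_Ioc_of_le hab).mpr <|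
    intervalIntegral.integrableOn_deriv_of_nonneg
      (HasDerivAt.continuousOn fun s hs => hderiv s (ha.trans hs.1))
      (fun s hs => hderiv s (ha.trans hs.1.le)) fun s _ => sq_nonneg _

theorem norm_sq_eq_sub_integral (hφ : SolvesErrorDynamics u φ t₀) (ha : t₀ ≤ a)
    (hab : a ≤ b) : ‖φ b‖ ^ 2 = ‖φ a‖ ^ 2 - 2 * ∫ s in a..b, ⟪u s, φ s⟫ ^ 2 := by
  have hftc := intervalIntegral.integral_eq_sub_of_hasDerivAt
    (fun s hs => hφ.hasDerivAt_norm_sq (ha.trans (uIcc_of_le hab ▸ hs).1))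
    ((hφ.intervalIntegrable_inner_sq ha hab).const_mul 2).neg
  rw [intervalIntegral.integral_neg, intervalIntegral.integral_const_mul] at hftc
  linarith

theorem norm_sub_le_mul_integral (hφ : SolvesErrorDynamics u φ t₀) (ha : t₀ ≤ a)
    (hab : a ≤ b) (hu : ∀ s ∈ Icc a b, ‖u s‖ ≤ M) :
    ‖φ b - φ a‖ ≤ M * ∫ s in a..b, |⟪u s, φ s⟫| := by
  rw [← intervalIntegral.integral_const_mul]
  refine norm_sub_le_integral_of_norm_deriv_le_of_le hab
    (HasDerivAt.continuousOn fun s hs => hφ s (ha.trans hs.1))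
    (fun s hs => (hφ s (ha.trans hs.1.le)).differentiableAt.differentiableWithinAt)
    (ae_of_all _ fun s hs => ?_)
    ((hφ.intervalIntegrable_inner_sq ha hab).abs_of_sq.const_mul M)
  rw [(hφ s (ha.trans hs.1.le)).deriv, norm_neg, norm_smul, Real.norm_eq_abs, mul_comm]
  gcongr
  exact hu s (Ioo_subset_Icc_self hs)

theorem abs_inner_le (hφ : SolvesErrorDynamics u φ t₀) (ha : t₀ ≤ a)
    (hu : ∀ s ∈ Icc a b, ‖u s‖ ≤ M) {τ : ℝ} (hτ : τ ∈ Icc a b) :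
    |⟪u τ, φ a⟫| ≤ |⟪u τ, φ τ⟫| + M ^ 2 * ∫ s in a..b, |⟪u s, φ s⟫| := by
  have hM : 0 ≤ M := (norm_nonneg _).trans (hu τ hτ)
  have hdrift : ‖φ τ - φ a‖ ≤ M * ∫ s in a..b, |⟪u s, φ s⟫| := by
    refine (hφ.norm_sub_le_mul_integral ha hτ.1
      fun s hs => hu s ⟨hs.1, hs.2.trans hτ.2⟩).trans ?_
    gcongr
    exact intervalIntegral.integral_mono_interval le_rfl hτ.1 hτ.2
      (ae_of_all _ fun s => abs_nonneg _)
      (hφ.intervalIntegrable_inner_sq ha (hτ.1.trans hτ.2)).abs_of_sq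
  calc |⟪u τ, φ a⟫| = |⟪u τ, φ τ⟫ + ⟪u τ, φ a - φ τ⟫| := by rw [inner_sub_right, add_sub_cancel]
    _ ≤ |⟪u τ, φ τ⟫| + ‖u τ‖ * ‖φ τ - φ a‖ := by
      rw [norm_sub_rev]
      exact (abs_add_le _ _).trans (by gcongr; exact abs_real_inner_le_norm _ _)
    _ ≤ |⟪u τ, φ τ⟫| + M * (M * ∫ s in a..b, |⟪u s, φ s⟫|) := by
      gcongr
      exact hu τ hτ
    _ = |⟪u τ, φ τ⟫| + M ^ 2 * ∫ s in a..b, |⟪u s, φ s⟫| := by ring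

theorem integral_inner_sq_le (hφ : SolvesErrorDynamics u φ t₀) (ha : t₀ ≤ a) (hab : a ≤ b)
    (hu : ∀ s ∈ Icc a b, ‖u s‖ ≤ M) :
    ∫ s in a..b, ⟪u s, φ a⟫ ^ 2 ≤ (1 + M ^ 2 * (b - a)) ^ 2 * ∫ s in a..b, ⟪u s, φ s⟫ ^ 2 := by
  set S := ∫ s in a..b, ⟪u s, φ s⟫ ^ 2
  set I := ∫ s in a..b, |⟪u s, φ s⟫|
  have hF2 := hφ.intervalIntegrable_inner_sq ha hab
  have hF2' : IntervalIntegrable (fun s => |⟪u s, φ s⟫| ^ 2) volume a b := by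
    simpa only [sq_abs] using hF2
  have hCS : I ^ 2 ≤ (b - a) * S := by
    simpa only [sq_abs] using
      intervalIntegral.sq_integral_le_mul_integral_sq hab hF2.abs_of_sq hF2'
  have hI : 0 ≤ I := intervalIntegral.integral_nonneg hab fun s _ => abs_nonneg _
  have hbound_int : IntervalIntegrable (fun s => (|⟪u s, φ s⟫| + M ^ 2 * I) ^ 2) volume a b := by
    refine (hF2'.add ((hF2.abs_of_sq.const_mul (2 * M ^ 2 * I)).add
      (intervalIntegrable_const (c := (M ^ 2 * I) ^ 2)))).congr fun s _ => ?_
    ring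
  calc ∫ s in a..b, ⟪u s, φ a⟫ ^ 2 ≤ ∫ s in a..b, (|⟪u s, φ s⟫| + M ^ 2 * I) ^ 2 := by
        refine intervalIntegral.integral_mono_on_of_nonneg hab (fun s _ => sq_nonneg _)
          hbound_int fun s hs => ?_
        rw [← sq_abs]
        gcongr
        exact hφ.abs_inner_le ha hu hs
    _ = S + 2 * (M ^ 2 * I) * I + (M ^ 2 * I) ^ 2 * (b - a) := by
        rw [intervalIntegral.integral_add_const_sq hF2.abs_of_sq hF2']
        simp only [sq_abs, S, I]
    _ ≤ (1 + M ^ 2 * (b - a)) ^ 2 * S := by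
        nlinarith [mul_le_mul_of_nonneg_left hCS (sq_nonneg M),
          mul_le_mul_of_nonneg_left hCS (mul_nonneg (pow_nonneg (sq_nonneg M) 2)
            (sub_nonneg.mpr hab))]

end SolvesErrorDynamics

end ErrorDynamics

/-- for φ̇ = −u uᵀ φ with u bounded and PE, the Lyapunov function
V = ½‖φ‖² contracts over each window of length T:
V(t+T) ≤ (1 − 2α²/(u_max²·T·(1+u_max²T)²))·V(t). -/
theorem lyapunov_contraction_over_window {n : ℕ}
    (u : ℝ → EuclideanSpace ℝ (Fin n)) (φ : ℝ → EuclideanSpace ℝ (Fin n))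
    (t₀ T α umax : ℝ) (hT : 0 < T) (hα : 0 < α) (humax : 0 < umax)
    (hbound : ∀ t, t₀ ≤ t → ‖u t‖ ≤ umax)
    (hPE : ∀ w : EuclideanSpace ℝ (Fin n), ‖w‖ = 1 → ∀ t, t₀ ≤ t →
      α ≤ ∫ τ in t..(t + T), ⟪u τ, w⟫ ^ 2)
    (hODE : ∀ t, t₀ ≤ t → HasDerivAt φ (-(⟪u t, φ t⟫ • u t)) t) :
    ∀ t, t₀ ≤ t →
      (1 / 2) * ‖φ (t + T)‖ ^ 2 ≤
        (1 - 2 * α ^ 2 / (umax ^ 2 * T * (1 + umax ^ 2 * T) ^ 2)) *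
          ((1 / 2) * ‖φ t‖ ^ 2) := by
  intro t ht
  have hφ : SolvesErrorDynamics u φ t₀ := hODE
  have hle : t ≤ t + T := by linarith
  have hu : ∀ s ∈ Icc t (t + T), ‖u s‖ ≤ umax := fun s hs => hbound s (ht.trans hs.1)
  set S := ∫ s in t..(t + T), ⟪u s, φ s⟫ ^ 2
  have hS : 0 ≤ S := intervalIntegral.integral_nonneg hle fun s _ => sq_nonneg _
  have hlow := le_integral_inner_sq_of_norm_eq_one (fun w hw => hPE w hw t ht) (φ t)
  have hup := hφ.integral_inner_sq_le ht hle hu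
  have hcap := integral_inner_sq_le_of_norm_le hle hu (φ t)
  rw [add_sub_cancel_left] at hup hcap
  have hkey : α ^ 2 * ‖φ t‖ ^ 2 ≤ umax ^ 2 * T * (1 + umax ^ 2 * T) ^ 2 * S := by
    rcases (sq_nonneg ‖φ t‖).eq_or_lt with hr | hr
    · rw [← hr, mul_zero]; positivity
    have hαk : α ≤ umax ^ 2 * T := le_of_mul_le_mul_right (by linarith) hr
    nlinarith
  have hD : 0 < umax ^ 2 * T * (1 + umax ^ 2 * T) ^ 2 := by positivity
  calc (1 / 2) * ‖φ (t + T)‖ ^ 2 = (1 / 2) * ‖φ t‖ ^ 2 - S := by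
        rw [hφ.norm_sq_eq_sub_integral ht hle]; ring
    _ ≤ (1 / 2) * ‖φ t‖ ^ 2 - α ^ 2 * ‖φ t‖ ^ 2 / (umax ^ 2 * T * (1 + umax ^ 2 * T) ^ 2) := by
        gcongr
        exact (div_le_iff₀' hD).mpr hkey
    _ = _ := by ring
end

section
/- For the dynamics φ̇ = −u(t)uᵀ(t)φ with u piecewise continuous, bounded, and persistently exciting (with upper bound β: ∫_t^{t+T}u uᵀ dτ ⪯ βI), the origin φ=0 is exponentially stable in the large: there exist κ>0, ν>0 such that ‖φ(t)‖ ≤ κ‖φ(t₀)‖e^{−ν(t−t₀)} for all initial conditions φ(t₀)∈ℝⁿ. -/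
/-!
Along a solution of `φ' = -⟪u, φ⟫ u` we have `(‖φ‖²)' = -2⟪u, φ⟫²`, so `‖φ‖` never increases and
over a window `[t, t + T]` the squared norm drops by exactly `2S`, where `S = ∫ ⟪u, φ⟫²`. By
Cauchy–Schwarz the state moves by at most `umax √(T S)` during the window, so the excitation
`∫ ⟪u, φ t⟫² ≥ α ‖φ t‖²` seen by the frozen initial state is at most `2 (1 + umax⁴ T²) S`. Hence
`‖φ (t + T)‖² ≤ (1 + M) / (1 + M + α) ‖φ t‖²` with `M = umax⁴ T²`, and iterating over consecutive
windows gives exponential decay.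

Integrability comes from the excitation bound itself: `∫ ⟪u, w⟫² ≥ α > 0` forces the integrand to
be integrable (a non-integrable one has integral `0`), and polarization together with an orthonormal
basis extends this to `⟪u, φ⟫ ⟪u, ψ⟫` for continuous `φ`, `ψ`.
-/

open RealInnerProductSpace MeasureTheory Set

section Excitation

variable {E : Type*} [NormedAddCommGroup E] [InnerProductSpace ℝ E] {u : ℝ → E} {a b α : ℝ}

theorem inner_sq_eq_norm_sq_mul_inner_inv_norm_smul_sq (x v : E) :
    ⟪x, v⟫ ^ 2 = ‖v‖ ^ 2 * ⟪x, ‖v‖⁻¹ • v⟫ ^ 2 := by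
  rcases eq_or_ne v 0 with rfl | hv
  · simp
  · rw [real_inner_smul_right]
    field_simp [norm_ne_zero_iff.mpr hv]

theorem mul_norm_sq_le_integral_inner_sq
    (hPE : ∀ w : E, ‖w‖ = 1 → α ≤ ∫ τ in a..b, ⟪u τ, w⟫ ^ 2) (v : E) :
    α * ‖v‖ ^ 2 ≤ ∫ τ in a..b, ⟪u τ, v⟫ ^ 2 := by
  rcases eq_or_ne v 0 with rfl | hv
  · simp
  simp_rw [inner_sq_eq_norm_sq_mul_inner_inv_norm_smul_sq _ v,
    intervalIntegral.integral_const_mul]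
  rw [mul_comm]
  exact mul_le_mul_of_nonneg_left (hPE _ (norm_smul_inv_norm hv)) (sq_nonneg _)

theorem intervalIntegrable_inner_sq_of_pos_le_integral (hα : 0 < α)
    (hPE : ∀ w : E, ‖w‖ = 1 → α ≤ ∫ τ in a..b, ⟪u τ, w⟫ ^ 2) (v : E) :
    IntervalIntegrable (fun τ ↦ ⟪u τ, v⟫ ^ 2) volume a b := by
  rcases eq_or_ne v 0 with rfl | hv
  · simp
  simp_rw [inner_sq_eq_norm_sq_mul_inner_inv_norm_smul_sq _ v]
  exact (intervalIntegral.intervalIntegrable_of_integral_ne_zero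
    (hα.trans_le (hPE _ (norm_smul_inv_norm hv))).ne').const_mul _

variable (hu : ∀ v, IntervalIntegrable (fun τ ↦ ⟪u τ, v⟫ ^ 2) volume a b)
include hu

theorem intervalIntegrable_inner_mul_inner (v w : E) :
    IntervalIntegrable (fun τ ↦ ⟪u τ, v⟫ * ⟪u τ, w⟫) volume a b := by
  refine (((hu (v + w)).sub (hu v)).sub (hu w)).div_const 2 |>.congr fun τ _ ↦ ?_
  simp only [inner_add_right]
  ring

theorem intervalIntegrable_inner_mul_inner_of_continuousOn [FiniteDimensional ℝ E]
    {φ ψ : ℝ → E} (hφ : ContinuousOn φ (uIcc a b)) (hψ : ContinuousOn ψ (uIcc a b)) :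
    IntervalIntegrable (fun τ ↦ ⟪u τ, φ τ⟫ * ⟪u τ, ψ τ⟫) volume a b := by
  let e := stdOrthonormalBasis ℝ E
  have hcoord : ∀ i j, IntervalIntegrable
      (fun τ ↦ ⟪u τ, e i⟫ * ⟪u τ, e j⟫ * (⟪e i, φ τ⟫ * ⟪e j, ψ τ⟫)) volume a b :=
    fun i j ↦ (intervalIntegrable_inner_mul_inner hu _ _).mul_continuousOn
      ((continuous_const.inner continuous_id).comp_continuousOn hφ |>.mul
        ((continuous_const.inner continuous_id).comp_continuousOn hψ))
  refine (IntervalIntegrable.sum Finset.univ fun i _ ↦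
    IntervalIntegrable.sum Finset.univ fun j _ ↦ hcoord i j).congr fun τ _ ↦ ?_
  simp only [Finset.sum_apply, ← e.sum_inner_mul_inner (u τ) (φ τ),
    ← e.sum_inner_mul_inner (u τ) (ψ τ), Finset.sum_mul_sum]
  exact Finset.sum_congr rfl fun i _ ↦ Finset.sum_congr rfl fun j _ ↦ by ring

end Excitation

theorem intervalIntegral.sq_integral_mul_le {f g : ℝ → ℝ} {a b : ℝ} (hab : a ≤ b)
    (hf : IntervalIntegrable (fun x ↦ f x ^ 2) volume a b)
    (hg : IntervalIntegrable (fun x ↦ g x ^ 2) volume a b)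
    (hfg : IntervalIntegrable (fun x ↦ f x * g x) volume a b) :
    (∫ x in a..b, f x * g x) ^ 2 ≤ (∫ x in a..b, f x ^ 2) * ∫ x in a..b, g x ^ 2 := by
  have hquad : ∀ c : ℝ, 0 ≤ (∫ x in a..b, f x ^ 2) * (c * c)
      + (-2 * ∫ x in a..b, f x * g x) * c + ∫ x in a..b, g x ^ 2 := fun c ↦ by
    have hexpand : ∫ x in a..b, (c * f x - g x) ^ 2
        = ∫ x in a..b, (c * c * f x ^ 2 - 2 * c * (f x * g x) + g x ^ 2) :=
      intervalIntegral.integral_congr fun x _ ↦ by ring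
    rw [intervalIntegral.integral_add ((hf.const_mul _).sub (hfg.const_mul _)) hg,
      intervalIntegral.integral_sub (hf.const_mul _) (hfg.const_mul _),
      intervalIntegral.integral_const_mul, intervalIntegral.integral_const_mul] at hexpand
    have : 0 ≤ ∫ x in a..b, (c * f x - g x) ^ 2 :=
      intervalIntegral.integral_nonneg hab fun x _ ↦ sq_nonneg _
    linarith
  have := discrim_le_zero hquad
  rw [discrim] at this
  nlinarith

section Bounded

variable {E : Type*} [NormedAddCommGroup E] [InnerProductSpace ℝ E] {u : ℝ → E} {a b umax : ℝ}

theorem inner_sq_le_sq_mul_norm_sq {x : E} {c : ℝ} (hx : ‖x‖ ≤ c) (v : E) :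
    ⟪x, v⟫ ^ 2 ≤ c ^ 2 * ‖v‖ ^ 2 :=
  calc ⟪x, v⟫ ^ 2 ≤ (‖x‖ * ‖v‖) ^ 2 := by
        rw [← sq_abs]; exact pow_le_pow_left₀ (abs_nonneg _) (abs_real_inner_le_norm _ _) 2
    _ ≤ (c * ‖v‖) ^ 2 := by gcongr
    _ = c ^ 2 * ‖v‖ ^ 2 := mul_pow _ _ _

theorem integral_inner_sq_le (hab : a ≤ b) (hbound : ∀ t ∈ Icc a b, ‖u t‖ ≤ umax) (v : E)
    (hv : IntervalIntegrable (fun τ ↦ ⟪u τ, v⟫ ^ 2) volume a b) :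
    ∫ τ in a..b, ⟪u τ, v⟫ ^ 2 ≤ umax ^ 2 * (b - a) * ‖v‖ ^ 2 := by
  calc ∫ τ in a..b, ⟪u τ, v⟫ ^ 2 ≤ ∫ _ in a..b, umax ^ 2 * ‖v‖ ^ 2 :=
        intervalIntegral.integral_mono_on hab hv intervalIntegrable_const
          fun τ hτ ↦ inner_sq_le_sq_mul_norm_sq (hbound τ hτ) v
    _ = umax ^ 2 * (b - a) * ‖v‖ ^ 2 := by
        rw [intervalIntegral.integral_const, smul_eq_mul]
        ring

end Bounded

section Flow

variable {E : Type*} [NormedAddCommGroup E] [InnerProductSpace ℝ E] {u φ : ℝ → E}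

def IsSolutionOn (u φ : ℝ → E) (D : Set ℝ) : Prop :=
  ∀ t ∈ D, HasDerivAt φ (-(⟪u t, φ t⟫ • u t)) t

theorem HasDerivAt.norm_sq_of_eq_neg_inner_smul {s : ℝ}
    (h : HasDerivAt φ (-(⟪u s, φ s⟫ • u s)) s) :
    HasDerivAt (‖φ ·‖ ^ 2) (-2 * ⟪u s, φ s⟫ ^ 2) s :=
  h.norm_sq.congr_deriv <| by
    rw [inner_neg_right, real_inner_smul_right, real_inner_comm]
    ring

theorem HasDerivAt.inner_const_of_eq_neg_inner_smul {s : ℝ}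
    (h : HasDerivAt φ (-(⟪u s, φ s⟫ • u s)) s) (w : E) :
    HasDerivAt (⟪φ ·, w⟫) (-(⟪u s, φ s⟫ * ⟪u s, w⟫)) s :=
  (h.inner ℝ (hasDerivAt_const s w)).congr_deriv <| by
    rw [inner_zero_right, zero_add, inner_neg_left, real_inner_smul_left]

namespace IsSolutionOn

theorem continuousOn {D : Set ℝ} (hφ : IsSolutionOn u φ D) : ContinuousOn φ D :=
  HasDerivAt.continuousOn hφ

theorem antitoneOn_norm {D : Set ℝ} (hD : Convex ℝ D) (hφ : IsSolutionOn u φ D) :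
    AntitoneOn (‖φ ·‖) D := by
  have hsq : AntitoneOn (‖φ ·‖ ^ 2) D :=
    antitoneOn_of_hasDerivWithinAt_nonpos hD
      (fun t ht ↦ (hφ t ht).norm_sq_of_eq_neg_inner_smul.continuousAt.continuousWithinAt)
      (fun t ht ↦ (hφ t (interior_subset ht)).norm_sq_of_eq_neg_inner_smul.hasDerivWithinAt)
      (fun t _ ↦ by nlinarith [sq_nonneg ⟪u t, φ t⟫])
  exact fun x hx y hy hxy ↦
    (pow_le_pow_iff_left₀ (norm_nonneg _) (norm_nonneg _) two_ne_zero).1 (hsq hx hy hxy)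

variable [FiniteDimensional ℝ E] {a b umax : ℝ} (hab : a ≤ b) (hφ : IsSolutionOn u φ (Icc a b))
  (hu : ∀ v, IntervalIntegrable (fun τ ↦ ⟪u τ, v⟫ ^ 2) volume a b)
include hab hφ hu

theorem intervalIntegrable_inner_sq :
    IntervalIntegrable (fun t ↦ ⟪u t, φ t⟫ ^ 2) volume a b := by
  have hφc : ContinuousOn φ (uIcc a b) := uIcc_of_le hab ▸ hφ.continuousOn
  simpa only [sq] using intervalIntegrable_inner_mul_inner_of_continuousOn hu hφc hφc

theorem norm_sq_eq_sub_integral :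
    ‖φ b‖ ^ 2 = ‖φ a‖ ^ 2 - 2 * ∫ t in a..b, ⟪u t, φ t⟫ ^ 2 := by
  have := intervalIntegral.integral_eq_sub_of_hasDerivAt
    (fun t ht ↦ (hφ t (uIcc_of_le hab ▸ ht)).norm_sq_of_eq_neg_inner_smul)
    ((hφ.intervalIntegrable_inner_sq hab hu).const_mul (-2))
  rw [intervalIntegral.integral_const_mul] at this
  linarith

theorem norm_sub_sq_le (hbound : ∀ t ∈ Icc a b, ‖u t‖ ≤ umax) :
    ‖φ b - φ a‖ ^ 2 ≤ umax ^ 2 * (b - a) * ∫ t in a..b, ⟪u t, φ t⟫ ^ 2 := by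
  set d := φ b - φ a
  set S := ∫ t in a..b, ⟪u t, φ t⟫ ^ 2
  have hφc : ContinuousOn φ (uIcc a b) := uIcc_of_le hab ▸ hφ.continuousOn
  have hmix := intervalIntegrable_inner_mul_inner_of_continuousOn hu hφc continuousOn_const
    (ψ := fun _ ↦ d)
  -- `‖d‖²` is the increment of `⟪φ ·, d⟫` over `[a, b]`
  have hd : ‖d‖ ^ 2 = -∫ t in a..b, ⟪u t, φ t⟫ * ⟪u t, d⟫ := by
    rw [← intervalIntegral.integral_neg, intervalIntegral.integral_eq_sub_of_hasDerivAt
      (fun t ht ↦ (hφ t (uIcc_of_le hab ▸ ht)).inner_const_of_eq_neg_inner_smul d) hmix.neg,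
      ← inner_sub_left, real_inner_self_eq_norm_sq]
  have hS : 0 ≤ S := intervalIntegral.integral_nonneg hab fun t _ ↦ sq_nonneg _
  have hd4 : (‖d‖ ^ 2) ^ 2 ≤ (umax ^ 2 * (b - a) * S) * ‖d‖ ^ 2 :=
    calc (‖d‖ ^ 2) ^ 2 = (∫ t in a..b, ⟪u t, φ t⟫ * ⟪u t, d⟫) ^ 2 := by rw [hd, neg_sq]
      _ ≤ S * ∫ t in a..b, ⟪u t, d⟫ ^ 2 := intervalIntegral.sq_integral_mul_le hab
          (hφ.intervalIntegrable_inner_sq hab hu) (hu d) hmix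
      _ ≤ S * (umax ^ 2 * (b - a) * ‖d‖ ^ 2) :=
          mul_le_mul_of_nonneg_left (integral_inner_sq_le hab hbound d (hu d)) hS
      _ = (umax ^ 2 * (b - a) * S) * ‖d‖ ^ 2 := by ring
  nlinarith [sq_nonneg ‖d‖, mul_nonneg (mul_nonneg (sq_nonneg umax) (sub_nonneg.2 hab)) hS]

theorem integral_inner_initial_sq_le (hbound : ∀ t ∈ Icc a b, ‖u t‖ ≤ umax) :
    ∫ t in a..b, ⟪u t, φ a⟫ ^ 2
      ≤ 2 * (1 + umax ^ 4 * (b - a) ^ 2) * ∫ t in a..b, ⟪u t, φ t⟫ ^ 2 := by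
  set S := ∫ t in a..b, ⟪u t, φ t⟫ ^ 2
  have hq := hφ.intervalIntegrable_inner_sq hab hu
  have hdisp : ∀ t ∈ Icc a b, ‖φ t - φ a‖ ^ 2 ≤ umax ^ 2 * (b - a) * S := by
    rintro t ⟨hat, htb⟩
    have hsub : uIcc a t ⊆ uIcc a b :=
      uIcc_subset_uIcc_left (by rw [uIcc_of_le hab]; exact ⟨hat, htb⟩)
    calc ‖φ t - φ a‖ ^ 2
        ≤ umax ^ 2 * (t - a) * ∫ s in a..t, ⟪u s, φ s⟫ ^ 2 :=
          norm_sub_sq_le hat (fun s hs ↦ hφ s ⟨hs.1, hs.2.trans htb⟩)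
            (fun v ↦ (hu v).mono_set hsub) (fun s hs ↦ hbound s ⟨hs.1, hs.2.trans htb⟩)
      _ ≤ umax ^ 2 * (b - a) * S := by
          gcongr
          · exact intervalIntegral.integral_nonneg hat fun s _ ↦ sq_nonneg _
          · exact intervalIntegral.integral_mono_interval le_rfl hat htb
              (Filter.Eventually.of_forall fun s ↦ sq_nonneg _) hq
  have hpt : ∀ t ∈ Icc a b,
      ⟪u t, φ a⟫ ^ 2 ≤ 2 * ⟪u t, φ t⟫ ^ 2 + 2 * (umax ^ 4 * (b - a) * S) := fun t ht ↦ by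
    have hut := inner_sq_le_sq_mul_norm_sq (hbound t ht) (φ t - φ a)
    rw [inner_sub_right] at hut
    nlinarith [mul_le_mul_of_nonneg_left (hdisp t ht) (sq_nonneg umax),
      sq_nonneg (2 * ⟪u t, φ t⟫ - ⟪u t, φ a⟫)]
  calc ∫ t in a..b, ⟪u t, φ a⟫ ^ 2
      ≤ ∫ t in a..b, (2 * ⟪u t, φ t⟫ ^ 2 + 2 * (umax ^ 4 * (b - a) * S)) :=
        intervalIntegral.integral_mono_on hab (hu _)
          ((hq.const_mul 2).add intervalIntegrable_const) hpt
    _ = 2 * (1 + umax ^ 4 * (b - a) ^ 2) * S := by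
        rw [intervalIntegral.integral_add (hq.const_mul 2) intervalIntegrable_const,
          intervalIntegral.integral_const_mul, intervalIntegral.integral_const, smul_eq_mul]
        ring

theorem norm_le_sqrt_mul_norm {α : ℝ} (hbound : ∀ t ∈ Icc a b, ‖u t‖ ≤ umax) (hα : 0 ≤ α)
    (hPE : ∀ v, α * ‖v‖ ^ 2 ≤ ∫ τ in a..b, ⟪u τ, v⟫ ^ 2) :
    ‖φ b‖ ≤ √((1 + umax ^ 4 * (b - a) ^ 2) / (1 + umax ^ 4 * (b - a) ^ 2 + α)) * ‖φ a‖ := by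
  set M := umax ^ 4 * (b - a) ^ 2
  have hM : 0 ≤ M := by positivity
  have henergy := hφ.norm_sq_eq_sub_integral hab hu
  have hexc := (hPE (φ a)).trans (hφ.integral_inner_initial_sq_le hab hu hbound)
  have hS : 0 ≤ ∫ t in a..b, ⟪u t, φ t⟫ ^ 2 :=
    intervalIntegral.integral_nonneg hab fun t _ ↦ sq_nonneg _
  -- with `X = ‖φ a‖²`, `Y = ‖φ b‖²`: `α Y ≤ α X ≤ (1 + M) (X - Y)`
  have hsq : ‖φ b‖ ^ 2 ≤ (1 + M) / (1 + M + α) * ‖φ a‖ ^ 2 := by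
    rw [div_mul_eq_mul_div, le_div_iff₀ (by positivity)]
    nlinarith
  rw [← Real.sqrt_sq (norm_nonneg (φ b)), ← Real.sqrt_sq (norm_nonneg (φ a)), ← Real.sqrt_mul]
  · exact Real.sqrt_le_sqrt hsq
  · positivity

end IsSolutionOn

end Flow

theorem AntitoneOn.le_inv_mul_mul_exp_of_le_mul {f : ℝ → ℝ} {t₀ T ρ : ℝ}
    (hf : AntitoneOn f (Ici t₀)) (hT : 0 < T) (hρ0 : 0 < ρ) (hρ1 : ρ ≤ 1)
    (hf₀ : 0 ≤ f t₀) (hstep : ∀ t, t₀ ≤ t → f (t + T) ≤ ρ * f t) {t : ℝ} (ht : t₀ ≤ t) :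
    f t ≤ ρ⁻¹ * f t₀ * Real.exp (Real.log ρ / T * (t - t₀)) := by
  have hgeom : ∀ k : ℕ, f (t₀ + k * T) ≤ ρ ^ k * f t₀ := by
    intro k
    induction k with
    | zero => simp
    | succ k ih =>
      calc f (t₀ + (k + 1 : ℕ) * T) = f (t₀ + k * T + T) := by push_cast; ring_nf
        _ ≤ ρ * f (t₀ + k * T) := hstep _ (le_add_of_nonneg_right (by positivity))
        _ ≤ ρ * (ρ ^ k * f t₀) := mul_le_mul_of_nonneg_left ih hρ0.le
        _ = ρ ^ (k + 1) * f t₀ := by ring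
  set k := ⌊(t - t₀) / T⌋₊
  have hkT : k * T ≤ t - t₀ :=
    (le_div_iff₀ hT).1 (Nat.floor_le (div_nonneg (sub_nonneg.2 ht) hT.le))
  have hk1 : (t - t₀) / T - 1 ≤ k := by linarith [Nat.lt_floor_add_one ((t - t₀) / T)]
  have hpow : ρ ^ k ≤ ρ⁻¹ * Real.exp (Real.log ρ / T * (t - t₀)) :=
    calc ρ ^ k = Real.exp (k * Real.log ρ) := by rw [Real.exp_nat_mul, Real.exp_log hρ0]
      _ ≤ Real.exp (((t - t₀) / T - 1) * Real.log ρ) :=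
          Real.exp_le_exp.2 (mul_le_mul_of_nonpos_right hk1 (Real.log_nonpos hρ0.le hρ1))
      _ = ρ⁻¹ * Real.exp (Real.log ρ / T * (t - t₀)) := by
          rw [← Real.exp_log (inv_pos.2 hρ0), ← Real.exp_add, Real.log_inv]
          ring_nf
  calc f t ≤ f (t₀ + k * T) := hf (by simp; positivity) (mem_Ici.2 ht) (by linarith)
    _ ≤ ρ ^ k * f t₀ := hgeom k
    _ ≤ ρ⁻¹ * Real.exp (Real.log ρ / T * (t - t₀)) * f t₀ :=
        mul_le_mul_of_nonneg_right hpow hf₀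
    _ = ρ⁻¹ * f t₀ * Real.exp (Real.log ρ / T * (t - t₀)) := by ring

theorem pe_implies_esl_general {n : ℕ}
    (u : ℝ → EuclideanSpace ℝ (Fin n)) (t₀ T α umax : ℝ)
    (hT : 0 < T) (hα : 0 < α)
    (hbound : ∀ t, t₀ ≤ t → ‖u t‖ ≤ umax)
    (hPElow : ∀ w : EuclideanSpace ℝ (Fin n), ‖w‖ = 1 → ∀ t, t₀ ≤ t →
      α ≤ ∫ τ in t..(t + T), ⟪u τ, w⟫ ^ 2) :
    ∃ κ ν : ℝ, 0 < κ ∧ 0 < ν ∧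
      ∀ φ : ℝ → EuclideanSpace ℝ (Fin n),
        (∀ t, t₀ ≤ t → HasDerivAt φ (-(⟪u t, φ t⟫ • u t)) t) →
        ∀ t, t₀ ≤ t → ‖φ t‖ ≤ κ * ‖φ t₀‖ * Real.exp (-ν * (t - t₀)) := by
  set M := umax ^ 4 * T ^ 2
  set ρ := √((1 + M) / (1 + M + α))
  have hρ0 : 0 < ρ := Real.sqrt_pos.2 (by positivity)
  have hρ1 : ρ < 1 := (Real.sqrt_lt' one_pos).2 <| by
    rw [one_pow]
    exact (div_lt_one (by positivity)).2 (by linarith)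
  refine ⟨ρ⁻¹, -Real.log ρ / T, inv_pos.2 hρ0, div_pos (neg_pos.2 (Real.log_neg hρ0 hρ1)) hT,
    fun φ hφ t ht ↦ ?_⟩
  have hstep : ∀ s, t₀ ≤ s → ‖φ (s + T)‖ ≤ ρ * ‖φ s‖ := fun s hs ↦ by
    have hwin : ∀ τ ∈ Icc s (s + T), t₀ ≤ τ := fun τ hτ ↦ hs.trans hτ.1
    have hPE : ∀ w : EuclideanSpace ℝ (Fin n), ‖w‖ = 1 →
        α ≤ ∫ τ in s..(s + T), ⟪u τ, w⟫ ^ 2 := fun w hw ↦ hPElow w hw s hs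
    simpa only [add_sub_cancel_left] using IsSolutionOn.norm_le_sqrt_mul_norm
      (le_add_of_nonneg_right hT.le) (fun τ hτ ↦ hφ τ (hwin τ hτ))
      (intervalIntegrable_inner_sq_of_pos_le_integral hα hPE)
      (fun τ hτ ↦ hbound τ (hwin τ hτ)) hα.le (mul_norm_sq_le_integral_inner_sq hPE)
  have hanti : AntitoneOn (‖φ ·‖) (Ici t₀) :=
    IsSolutionOn.antitoneOn_norm (convex_Ici t₀) fun s hs ↦ hφ s hs
  simpa only [neg_div, neg_neg] using
    hanti.le_inv_mul_mul_exp_of_le_mul hT hρ0 hρ1.le (norm_nonneg _) hstep ht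

/-- for φ̇ = −u uᵀ φ with u bounded and persistently exciting
(with lower bound α and upper bound β on the excitation integral),
the origin is exponentially stable in the large. -/
theorem pe_implies_esl {n : ℕ}
    (u : ℝ → EuclideanSpace ℝ (Fin n)) (t₀ T α β umax : ℝ)
    (hT : 0 < T) (hα : 0 < α) (hαβ : α ≤ β) (humax : 0 < umax)
    (hbound : ∀ t, t₀ ≤ t → ‖u t‖ ≤ umax)
    (hPElow : ∀ w : EuclideanSpace ℝ (Fin n), ‖w‖ = 1 → ∀ t, t₀ ≤ t →
      α ≤ ∫ τ in t..(t + T), ⟪u τ, w⟫ ^ 2)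
    (hPEhigh : ∀ w : EuclideanSpace ℝ (Fin n), ‖w‖ = 1 → ∀ t, t₀ ≤ t →
      (∫ τ in t..(t + T), ⟪u τ, w⟫ ^ 2) ≤ β) :
    ∃ κ ν : ℝ, 0 < κ ∧ 0 < ν ∧
      ∀ φ : ℝ → EuclideanSpace ℝ (Fin n),
        (∀ t, t₀ ≤ t → HasDerivAt φ (-(⟪u t, φ t⟫ • u t)) t) →
        ∀ t, t₀ ≤ t → ‖φ t‖ ≤ κ * ‖φ t₀‖ * Real.exp (-ν * (t - t₀)) :=
  pe_implies_esl_general u t₀ T α umax hT hα hbound hPElow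
end

section
/- In the proof of persistent-excitation-based convergence, the parameter drift over a window is bounded by the regressor output: for φ̇ = −u uᵀφ with ‖u(t)‖≤u_max, one has ∫_t^{t+T} |uᵀ(τ)(φ(t)−φ(τ))| dτ ≤ u_max²·T·∫_t^{t+T} ‖uᵀ(τ)φ(τ)‖ dτ. -/
/-!
Each `φ τ - φ t` with `τ` in the window is the integral of `φ̇ = -⟪u, φ⟫ • u`, whose norm
is at most `u_max · |⟪u, φ⟫|`; so the drift is at most `u_max · ∫ |⟪u, φ⟫|` uniformly on the
window, and pairing it with `u τ` and integrating over the window gives the remaining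
`u_max · T`.
-/

open RealInnerProductSpace MeasureTheory Set

variable {E : Type*} [NormedAddCommGroup E] [InnerProductSpace ℝ E]

theorem integral_abs_inner_sub_le {v ψ : ℝ → E} {a b K D : ℝ} (hab : a ≤ b)
    (hv : ∀ s ∈ Icc a b, ‖v s‖ ≤ K) (hψ : ∀ s ∈ Icc a b, ‖ψ a - ψ s‖ ≤ D) :
    ∫ s in a..b, |⟪v s, ψ a - ψ s⟫| ≤ K * D * (b - a) := by
  have hK : 0 ≤ K := (norm_nonneg _).trans (hv a (left_mem_Icc.2 hab))
  have hpt : ∀ s ∈ uIoc a b, ‖|⟪v s, ψ a - ψ s⟫|‖ ≤ K * D := by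
    intro s hs
    rw [uIoc_of_le hab] at hs
    rw [Real.norm_eq_abs, abs_abs]
    exact (abs_real_inner_le_norm _ _).trans <|
      mul_le_mul (hv s (Ioc_subset_Icc_self hs)) (hψ s (Ioc_subset_Icc_self hs)) (norm_nonneg _) hK
  calc _ ≤ ‖∫ s in a..b, |⟪v s, ψ a - ψ s⟫|‖ := Real.le_norm_self _
    _ ≤ K * D * |b - a| := intervalIntegral.norm_integral_le_of_norm_le_const hpt
    _ = K * D * (b - a) := by rw [abs_of_nonneg (sub_nonneg.2 hab)]

section GradientFlow

variable {u φ : ℝ → E} {x : ℝ}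

theorem norm_deriv_le_mul_abs_inner {K : ℝ} (hφ : HasDerivAt φ (-(⟪u x, φ x⟫ • u x)) x)
    (hu : ‖u x‖ ≤ K) : ‖deriv φ x‖ ≤ K * |⟪u x, φ x⟫| := by
  rw [hφ.deriv, norm_neg, norm_smul, Real.norm_eq_abs, mul_comm]
  exact mul_le_mul_of_nonneg_right hu (abs_nonneg _)

/-- Expresses the regressor output through `deriv φ`, which is measurable even when `u` is not. -/
theorem sqrt_neg_inner_deriv (hφ : HasDerivAt φ (-(⟪u x, φ x⟫ • u x)) x) :
    √(-⟪deriv φ x, φ x⟫) = |⟪u x, φ x⟫| := by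
  rw [hφ.deriv, inner_neg_left, real_inner_smul_left, neg_neg, Real.sqrt_mul_self_eq_abs]

variable [CompleteSpace E]

theorem aestronglyMeasurable_abs_inner {s : Set ℝ} (hs : MeasurableSet s)
    (hφ : ∀ x ∈ s, HasDerivAt φ (-(⟪u x, φ x⟫ • u x)) x) :
    AEStronglyMeasurable (fun x ↦ |⟪u x, φ x⟫|) (volume.restrict s) := by
  have hφc : ContinuousOn φ s := fun x hx ↦ (hφ x hx).continuousAt.continuousWithinAt
  have hsqrt : AEStronglyMeasurable (fun x ↦ √(-⟪deriv φ x, φ x⟫)) (volume.restrict s) :=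
    Real.continuous_sqrt.comp_aestronglyMeasurable
      ((aestronglyMeasurable_deriv φ _).inner (hφc.aestronglyMeasurable hs)).neg
  refine hsqrt.congr ?_
  exact (ae_restrict_iff' hs).2 (ae_of_all _ fun x hx ↦ sqrt_neg_inner_deriv (hφ x hx))

variable {a b K : ℝ}

theorem integrableOn_abs_inner (hu : ∀ x ∈ Icc a b, ‖u x‖ ≤ K)
    (hφ : ∀ x ∈ Icc a b, HasDerivAt φ (-(⟪u x, φ x⟫ • u x)) x) :
    IntegrableOn (fun x ↦ |⟪u x, φ x⟫|) (Icc a b) := by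
  obtain ⟨M, hM⟩ := isCompact_Icc.exists_bound_of_continuousOn
    fun x hx ↦ (hφ x hx).continuousAt.continuousWithinAt
  refine .of_bound measure_Icc_lt_top (aestronglyMeasurable_abs_inner measurableSet_Icc hφ)
    (K * M) ((ae_restrict_iff' measurableSet_Icc).2 (ae_of_all _ fun x hx ↦ ?_))
  rw [Real.norm_eq_abs, abs_abs]
  exact (abs_real_inner_le_norm _ _).trans <|
    mul_le_mul (hu x hx) (hM x hx) (norm_nonneg _) ((norm_nonneg _).trans (hu x hx))

theorem norm_sub_le_mul_integral_abs_inner (hab : a ≤ b) (hu : ∀ x ∈ Icc a b, ‖u x‖ ≤ K)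
    (hφ : ∀ x ∈ Icc a b, HasDerivAt φ (-(⟪u x, φ x⟫ • u x)) x) (hx : x ∈ Icc a b) :
    ‖φ a - φ x‖ ≤ K * ∫ y in a..b, |⟪u y, φ y⟫| := by
  have hK : 0 ≤ K := (norm_nonneg _).trans (hu a (left_mem_Icc.2 hab))
  have hint : IntervalIntegrable (fun y ↦ K * |⟪u y, φ y⟫|) volume a b :=
    ((intervalIntegrable_iff_integrableOn_Icc_of_le hab).2
      (integrableOn_abs_inner hu hφ)).const_mul K
  have hsub : Icc a x ⊆ Icc a b := Icc_subset_Icc le_rfl hx.2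
  have hsub' : Ioo a x ⊆ Icc a b := Ioo_subset_Icc_self.trans hsub
  calc ‖φ a - φ x‖ = ‖φ x - φ a‖ := norm_sub_rev _ _
    _ ≤ ∫ y in a..x, K * |⟪u y, φ y⟫| :=
      norm_sub_le_integral_of_norm_deriv_le_of_le hx.1
        (fun y hy ↦ (hφ y (hsub hy)).continuousAt.continuousWithinAt)
        (fun y hy ↦ (hφ y (hsub' hy)).differentiableAt.differentiableWithinAt)
        (ae_of_all _ fun y hy ↦ norm_deriv_le_mul_abs_inner (hφ y (hsub' hy)) (hu y (hsub' hy)))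
        (hint.mono_set (by rw [uIcc_of_le hx.1, uIcc_of_le hab]; exact hsub))
    _ ≤ ∫ y in a..b, K * |⟪u y, φ y⟫| :=
      intervalIntegral.integral_mono_interval le_rfl hx.1 hx.2
        (ae_of_all _ fun y ↦ mul_nonneg hK (abs_nonneg _)) hint
    _ = K * ∫ y in a..b, |⟪u y, φ y⟫| := intervalIntegral.integral_const_mul K _

end GradientFlow

theorem drift_bounded_by_regressor_output_general {n : ℕ}
    (u : ℝ → EuclideanSpace ℝ (Fin n)) (φ : ℝ → EuclideanSpace ℝ (Fin n))
    (t₀ T umax : ℝ) (hT : 0 < T)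
    (hbound : ∀ t, t₀ ≤ t → ‖u t‖ ≤ umax)
    (hODE : ∀ t, t₀ ≤ t → HasDerivAt φ (-(⟪u t, φ t⟫ • u t)) t) :
    ∀ t, t₀ ≤ t →
      (∫ τ in t..(t + T), |⟪u τ, φ t - φ τ⟫|) ≤
        umax ^ 2 * T * ∫ τ in t..(t + T), |⟪u τ, φ τ⟫| := by
  intro t ht
  have hwin : t ≤ t + T := by linarith
  have hu : ∀ s ∈ Icc t (t + T), ‖u s‖ ≤ umax := fun s hs ↦ hbound s (ht.trans hs.1)
  have hφ : ∀ s ∈ Icc t (t + T), HasDerivAt φ (-(⟪u s, φ s⟫ • u s)) s :=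
    fun s hs ↦ hODE s (ht.trans hs.1)
  calc _ ≤ umax * (umax * ∫ τ in t..(t + T), |⟪u τ, φ τ⟫|) * (t + T - t) :=
        integral_abs_inner_sub_le hwin hu fun s hs ↦
          norm_sub_le_mul_integral_abs_inner hwin hu hφ hs
    _ = _ := by ring

/-- parameter drift over a window is bounded by the regressor output:
∫_t^{t+T} |uᵀ(τ)(φ(t)−φ(τ))| dτ ≤ u_max²·T·∫_t^{t+T} |uᵀ(τ)φ(τ)| dτ. -/
theorem drift_bounded_by_regressor_output {n : ℕ}
    (u : ℝ → EuclideanSpace ℝ (Fin n)) (φ : ℝ → EuclideanSpace ℝ (Fin n))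
    (t₀ T umax : ℝ) (hT : 0 < T) (humax : 0 < umax)
    (hbound : ∀ t, t₀ ≤ t → ‖u t‖ ≤ umax)
    (hODE : ∀ t, t₀ ≤ t → HasDerivAt φ (-(⟪u t, φ t⟫ • u t)) t) :
    ∀ t, t₀ ≤ t →
      (∫ τ in t..(t + T), |⟪u τ, φ t - φ τ⟫|) ≤
        umax ^ 2 * T * ∫ τ in t..(t + T), |⟪u τ, φ τ⟫| :=
  drift_bounded_by_regressor_output_general u φ t₀ T umax hT hbound hODE
end

section
/- (Bounded velocity in the invariant region, ORM case) For the scalar ORM error dynamics ė = ae + bφ(e+x̄), φ̇ = −γe(e+x̄) with a<0, b>0, γ>0, x̄>0, on the set M₀ = M₁∪M₂∪M₃ (M₁ = {(e,φ): φ<a/b, −x̄<e<(a−bφ)x̄/(a+bφ)}, M₂ = {(e,φ): a/b≤φ<0, −x̄<e<0}, M₃ = {(e,φ): e²+φ²/γ < x̄²}), the velocity is uniformly bounded: ‖(ė,φ̇)‖ ≤ d_z where d_z = √((|ax̄| + 2b√γ·x̄²)² + (2γx̄²)²). -/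
lemma sqrt_key (u v B1 B2 : ℝ) (h1 : |u| ≤ B1) (h2 : |v| ≤ B2) :
    Real.sqrt (u ^ 2 + v ^ 2) ≤ Real.sqrt (B1 ^ 2 + B2 ^ 2) := by
  apply Real.sqrt_le_sqrt
  have hu := abs_nonneg u
  have hv := abs_nonneg v
  nlinarith [sq_abs u, sq_abs v]

lemma second_bound (γ xbar e : ℝ) (hγ : 0 < γ) (hx : 0 < xbar)
    (h1 : -xbar ≤ e) (h2 : e ≤ xbar) :
    |(-γ * e * (e + xbar))| ≤ 2 * γ * xbar ^ 2 := by
  rw [abs_le]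
  constructor
  · nlinarith [mul_nonneg hγ.le (mul_nonneg (by linarith : 0 ≤ xbar - e) hx.le),
      mul_nonneg hγ.le (mul_nonneg (by linarith : 0 ≤ xbar - e) (by linarith : 0 ≤ e + xbar)),
      mul_nonneg hγ.le (sq_nonneg xbar)]
  · nlinarith [mul_nonneg hγ.le (sq_nonneg (2 * e + xbar)),
      mul_nonneg hγ.le (sq_nonneg xbar)]

/-- bounded velocity on the invariant region, ORM case: on
M₀ = M₁ ∪ M₂ ∪ M₃ the vector field (ae+bφ(e+x̄), −γe(e+x̄)) has norm at most
d_z = √((|ax̄| + 2b√γ·x̄²)² + (2γx̄²)²). -/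
theorem orm_bounded_velocity (a b γ xbar : ℝ)
    (ha : a < 0) (hb : 0 < b) (hγ : 0 < γ) (hxbar : 0 < xbar) :
    ∀ e φ : ℝ,
      (e, φ) ∈ ({p : ℝ × ℝ | p.2 < a / b ∧ -xbar < p.1 ∧
                    p.1 < (a - b * p.2) * xbar / (a + b * p.2)} ∪
                 {p : ℝ × ℝ | a / b ≤ p.2 ∧ p.2 < 0 ∧ -xbar < p.1 ∧ p.1 < 0} ∪
                 {p : ℝ × ℝ | p.1 ^ 2 + p.2 ^ 2 / γ < xbar ^ 2}) →
      Real.sqrt ((a * e + b * φ * (e + xbar)) ^ 2 + (-γ * e * (e + xbar)) ^ 2) ≤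
        Real.sqrt ((|a * xbar| + 2 * b * Real.sqrt γ * xbar ^ 2) ^ 2 +
          (2 * γ * xbar ^ 2) ^ 2) := by
  intro e φ hmem
  have hsγ : 0 < Real.sqrt γ := Real.sqrt_pos.mpr hγ
  have hsγ2 : Real.sqrt γ ^ 2 = γ := Real.sq_sqrt hγ.le
  have haxbar : |a * xbar| = -(a * xbar) := abs_of_neg (by nlinarith)
  -- bounds on e in each region
  have hebound : -xbar ≤ e ∧ e ≤ xbar := by
    rcases hmem with (h | h) | h
    · obtain ⟨hφ, he1, he2⟩ := h
      simp only [Set.mem_setOf_eq] at *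
      have hbφ : b * φ < a := by
        have := (lt_div_iff₀ hb).mp hφ; linarith
      have hneg : a + b * φ < 0 := by linarith
      have hq : (a - b * φ) * xbar / (a + b * φ) < 0 :=
        div_neg_of_pos_of_neg (by nlinarith) hneg
      constructor <;> linarith
    · obtain ⟨hφ1, hφ2, he1, he2⟩ := h
      constructor <;> linarith
    · simp only [Set.mem_setOf_eq] at h
      have he2 : e ^ 2 ≤ xbar ^ 2 := by
        have : 0 ≤ φ ^ 2 / γ := div_nonneg (sq_nonneg φ) hγ.le
        nlinarith
      have := Real.sqrt_le_sqrt he2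
      rw [Real.sqrt_sq_eq_abs, Real.sqrt_sq hxbar.le] at this
      exact abs_le.mp this
  apply sqrt_key
  · -- |a*e + b*φ*(e+xbar)| ≤ |a*xbar| + 2*b*√γ*xbar^2
    rw [haxbar, abs_le]
    rcases hmem with (h | h) | h
    · obtain ⟨hφ, he1, he2⟩ := h
      simp only [Set.mem_setOf_eq] at *
      have hbφ : b * φ < a := by
        have := (lt_div_iff₀ hb).mp hφ; linarith
      have hneg : a + b * φ < 0 := by linarith
      have hkey : (a - b * φ) * xbar < e * (a + b * φ) :=
        (lt_div_iff_of_neg hneg).mp he2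
      have he0 : e < 0 := by
        have hq : (a - b * φ) * xbar / (a + b * φ) < 0 :=
          div_neg_of_pos_of_neg (by nlinarith) hneg
        linarith
      have hex : 0 < e + xbar := by linarith
      constructor
      · nlinarith [mul_nonneg (mul_nonneg hb.le hsγ.le) (sq_nonneg xbar)]
      · nlinarith [mul_pos (by linarith : (0:ℝ) < a - b * φ) hex,
          mul_nonneg (mul_nonneg hb.le hsγ.le) (sq_nonneg xbar)]
    · obtain ⟨hφ1, hφ2, he1, he2⟩ := h
      simp only [Set.mem_setOf_eq] at *
      have hbφ : a ≤ b * φ := by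
        have := (div_le_iff₀ hb).mp hφ1; linarith
      have hex : 0 < e + xbar := by linarith
      constructor
      · nlinarith [mul_nonneg (mul_nonneg hb.le hsγ.le) (sq_nonneg xbar),
          mul_nonneg (by linarith : 0 ≤ b * φ - a) hex.le]
      · nlinarith [mul_nonneg (mul_nonneg hb.le hsγ.le) (sq_nonneg xbar),
          mul_nonneg (mul_nonneg hb.le (by linarith : (0:ℝ) ≤ -φ)) hex.le,
          mul_nonneg (by linarith : (0:ℝ) ≤ -a) hex.le]
    · simp only [Set.mem_setOf_eq] at h
      obtain ⟨he1, he2'⟩ := hebound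
      have hφsq : φ ^ 2 ≤ (Real.sqrt γ * xbar) ^ 2 := by
        rw [mul_pow, hsγ2]
        have := (div_lt_iff₀ hγ).mp (by nlinarith [sq_nonneg e] : φ ^ 2 / γ < xbar ^ 2)
        nlinarith
      have hφ : |φ| ≤ Real.sqrt γ * xbar := by
        have := Real.sqrt_le_sqrt hφsq
        rwa [Real.sqrt_sq_eq_abs, Real.sqrt_sq (by positivity)] at this
      obtain ⟨hφ1, hφ2'⟩ := abs_le.mp hφ
      have hex1 : 0 ≤ e + xbar := by linarith
      have hex2 : e + xbar ≤ 2 * xbar := by linarith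
      constructor
      · nlinarith [mul_nonneg hb.le
            (mul_nonneg (by linarith : 0 ≤ φ + Real.sqrt γ * xbar) hex1),
          mul_nonneg hb.le (mul_nonneg (mul_nonneg hsγ.le hxbar.le)
            (by linarith : 0 ≤ 2 * xbar - (e + xbar))),
          mul_nonneg (by linarith : (0:ℝ) ≤ -a) (by linarith : 0 ≤ xbar - e)]
      · nlinarith [mul_nonneg hb.le
            (mul_nonneg (by linarith : 0 ≤ Real.sqrt γ * xbar - φ) hex1),
          mul_nonneg hb.le (mul_nonneg (mul_nonneg hsγ.le hxbar.le)
            (by linarith : 0 ≤ 2 * xbar - (e + xbar))),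
          mul_nonneg (by linarith : (0:ℝ) ≤ -a) hex1]
  · exact second_bound γ xbar e hγ hxbar hebound.1 hebound.2
end

section
/- (Sticking corollary, ORM) For the scalar ORM dynamics φ̇ = −γe(e+x̄) with a<0, b>0, γ>0, x̄>0: if (e,φ)∈M₁ then writing e = −x̄+Δ with 0 ≤ Δ ≤ 2a x̄/(a+bφ), one has φ̇ = −γ(Δ−x̄)Δ and |φ̇| ≤ γ(x̄Δ + Δ²), and since Δ ≤ 2a x̄/(a+bφ) → 0 as φ→−∞, it follows that φ̇(e,φ) → 0 as φ → −∞ with (e,φ)∈M₁. -/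
/-- sticking corollary, ORM: for the scalar ORM dynamics
φ̇ = −γe(e+x̄), the rate φ̇ tends to 0 as φ → −∞ inside
M₁ = {(e,φ) : φ < a/b, −x̄ < e < (a−bφ)x̄/(a+bφ)}: for every ε > 0 there is Φ < 0
such that φ < Φ and (e,φ) ∈ M₁ imply |−γe(e+x̄)| < ε. -/
theorem orm_sticking (a b γ xbar : ℝ)
    (ha : a < 0) (hb : 0 < b) (hγ : 0 < γ) (hxbar : 0 < xbar) :
    ∀ ε : ℝ, 0 < ε → ∃ Φ : ℝ, Φ < 0 ∧
      ∀ e φ : ℝ, φ < Φ →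
        (φ < a / b ∧ -xbar < e ∧ e < (a - b * φ) * xbar / (a + b * φ)) →
        |(-γ) * e * (e + xbar)| < ε := by
  intro ε hε
  have hγx : 0 < γ * xbar + 1 := by positivity
  set δ : ℝ := min xbar (ε / (γ * xbar + 1)) with hδdef
  have hδpos : 0 < δ := lt_min hxbar (by positivity)
  have hδx : δ ≤ xbar := min_le_left _ _
  have hδε : δ * (γ * xbar + 1) ≤ ε := by
    have h := min_le_right xbar (ε / (γ * xbar + 1))
    calc δ * (γ * xbar + 1) ≤ (ε / (γ * xbar + 1)) * (γ * xbar + 1) := by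
          exact mul_le_mul_of_nonneg_right h (le_of_lt hγx)
      _ = ε := by field_simp
  refine ⟨min (-1) ((2 * a * xbar / δ - a) / b),
    lt_of_le_of_lt (min_le_left _ _) (by norm_num), ?_⟩
  intro e φ hφ ⟨hφab, he1, he2⟩
  have hc : a + b * φ < 0 := by
    have h1 : φ * b < a := (lt_div_iff₀ hb).mp hφab
    nlinarith
  have hφ2 : φ < (2 * a * xbar / δ - a) / b := lt_of_lt_of_le hφ (min_le_right _ _)
  have h2 : φ * b < 2 * a * xbar / δ - a := (lt_div_iff₀ hb).mp hφ2
  have h3 : δ * (a + b * φ) < 2 * a * xbar := by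
    have : a + b * φ < 2 * a * xbar / δ := by nlinarith
    have := mul_lt_mul_of_pos_left this hδpos
    calc δ * (a + b * φ) < δ * (2 * a * xbar / δ) := this
      _ = 2 * a * xbar := by field_simp
  have hbound : 2 * a * xbar / (a + b * φ) < δ := by
    exact (div_lt_iff_of_neg hc).mpr h3
  have hne : a + b * φ ≠ 0 := ne_of_lt hc
  have heq : (a - b * φ) * xbar / (a + b * φ) = 2 * a * xbar / (a + b * φ) - xbar := by
    field_simp
    ring
  have hΔ : e + xbar < δ := by
    have : e < 2 * a * xbar / (a + b * φ) - xbar := heq ▸ he2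
    linarith
  have hΔpos : 0 < e + xbar := by linarith
  have heneg : e < 0 := by linarith
  have habs : |(-γ) * e * (e + xbar)| = γ * (-e) * (e + xbar) := by
    rw [abs_of_pos]
    · ring
    · have h0 : 0 < -e := by linarith
      have : 0 < γ * (-e) * (e + xbar) := mul_pos (mul_pos hγ h0) hΔpos
      nlinarith
  rw [habs]
  have hme : -e < xbar := by linarith
  have : γ * (-e) * (e + xbar) < γ * xbar * δ := by
    apply mul_lt_mul' _ hΔ (le_of_lt hΔpos)
    · positivity
    · nlinarith
  nlinarith
end

section
/- (Non-ESL from state-dependent attraction time) Suppose for a system with transition function s(t;x₀,t₀) there exist constants d_z>0 and an unbounded positively invariant set M₀ ∋ 0 such that every trajectory starting at z₀∈M₀ satisfies: whenever ‖s(t₁;z₀,t₀)‖ ≤ c‖z₀‖ (0<c<1), then t₁−t₀ ≥ ‖z₀‖(1−c)/d_z. Then the equilibrium cannot be exponentially stable in the large: there are no κ,ν>0 with ‖s(t;z₀,t₀)‖ ≤ κ‖z₀‖e^{−ν(t−t₀)} for all z₀. -/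
/-- non-ESL from state-dependent attraction time: if trajectories
starting in an unbounded invariant set M₀ need at least time ‖z₀‖(1−c)/d_z to
contract to a fraction c of their initial norm, then the equilibrium cannot be
exponentially stable in the large. -/
theorem no_esl_from_contraction_time {n : ℕ}
    (s : ℝ → EuclideanSpace ℝ (Fin n) → ℝ → EuclideanSpace ℝ (Fin n))
    (t₀ : ℝ) (dz : ℝ) (hdz : 0 < dz)
    (M₀ : Set (EuclideanSpace ℝ (Fin n))) (h0 : (0 : EuclideanSpace ℝ (Fin n)) ∈ M₀)
    (hunbounded : ∀ R : ℝ, ∃ z₀ ∈ M₀, R < ‖z₀‖)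
    (hslow : ∀ z₀ ∈ M₀, ∀ c : ℝ, 0 < c → c < 1 → ∀ t₁, t₀ ≤ t₁ →
      ‖s t₁ z₀ t₀‖ ≤ c * ‖z₀‖ → ‖z₀‖ * (1 - c) / dz ≤ t₁ - t₀) :
    ¬ ∃ κ ν : ℝ, 0 < κ ∧ 0 < ν ∧
      ∀ (z₀ : EuclideanSpace ℝ (Fin n)) (t : ℝ), t₀ ≤ t →
        ‖s t z₀ t₀‖ ≤ κ * ‖z₀‖ * Real.exp (-ν * (t - t₀)) := by

  rintro ⟨κ, ν, hκ, hν, hbound⟩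
  -- choose a time T at which the exponential factor is at most 1/2
  set T : ℝ := max t₀ (t₀ + Real.log (2 * κ) / ν) with hT
  have hTt₀ : t₀ ≤ T := le_max_left _ _
  have hexp : κ * Real.exp (-ν * (T - t₀)) ≤ 1 / 2 := by
    have h1 : t₀ + Real.log (2 * κ) / ν ≤ T := le_max_right _ _
    have h2 : Real.log (2 * κ) / ν ≤ T - t₀ := by linarith
    have h3 : Real.log (2 * κ) ≤ ν * (T - t₀) := by
      have := (div_le_iff₀ hν).mp h2
      linarith [mul_comm (T - t₀) ν ▸ this]
    have h4 : Real.exp (Real.log (2 * κ)) ≤ Real.exp (ν * (T - t₀)) :=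
      Real.exp_le_exp.mpr h3
    rw [Real.exp_log (by positivity)] at h4
    have h5 : Real.exp (-ν * (T - t₀)) = (Real.exp (ν * (T - t₀)))⁻¹ := by
      rw [← Real.exp_neg]; ring_nf
    rw [h5]
    have hepos : (0:ℝ) < Real.exp (ν * (T - t₀)) := Real.exp_pos _
    have hE : Real.exp (ν * (T - t₀)) * (Real.exp (ν * (T - t₀)))⁻¹ = 1 :=
      mul_inv_cancel₀ hepos.ne'
    have hinv : (0:ℝ) < (Real.exp (ν * (T - t₀)))⁻¹ := inv_pos.mpr hepos
    nlinarith [mul_le_mul_of_nonneg_right h4 hinv.le]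
  -- pick z₀ large
  obtain ⟨z₀, hz₀M, hz₀⟩ := hunbounded (max 0 (2 * dz * (T - t₀)))
  have hz₀pos : 0 < ‖z₀‖ := lt_of_le_of_lt (le_max_left _ _) hz₀
  have hz₀big : 2 * dz * (T - t₀) < ‖z₀‖ := lt_of_le_of_lt (le_max_right _ _) hz₀
  have hb := hbound z₀ T hTt₀
  have hcontr : ‖s T z₀ t₀‖ ≤ (1/2) * ‖z₀‖ := by
    calc ‖s T z₀ t₀‖ ≤ κ * ‖z₀‖ * Real.exp (-ν * (T - t₀)) := hb
      _ = (κ * Real.exp (-ν * (T - t₀))) * ‖z₀‖ := by ring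
      _ ≤ (1/2) * ‖z₀‖ := by
          apply mul_le_mul_of_nonneg_right hexp (norm_nonneg _)
  have := hslow z₀ hz₀M (1/2) (by norm_num) (by norm_num) T hTt₀ hcontr
  have h6 : ‖z₀‖ * (1 - 1/2) / dz = ‖z₀‖ / (2 * dz) := by ring
  rw [h6] at this
  have h7 : ‖z₀‖ ≤ 2 * dz * (T - t₀) := by
    have := (div_le_iff₀ (by positivity : (0:ℝ) < 2 * dz)).mp this
    linarith [mul_comm (T - t₀) (2 * dz) ▸ this]
  linarith
end
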